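/- arXiv:1908.04645 — 3 statements merged into one kernel-verified Lean document; each statement's English description precedes it below -/
import Mathlib

section
/- Let A be an SLAA and b an infinite branch of a run of A. Then every mark m ∈ M(b) (i.e., every mark occurring infinitely often on b) belongs to the mark set of some looping transition of A; in particular, marks occurring only on non-looping transitions occur at most finitely often on every branch. -/
set_option maxHeartbeats 1000000

namespace SLAA

/-- Shift an infinite word: `shift u i` is the suffix `u[i..]`. -/
def shift {α : Type} (u : ℕ → α) (i : ℕ) : ℕ → α := fun k => u (k + i)

/-- LTL formulae in positive normal form over atomic propositions `AP`
(`ev` is the eventually operator F, `alw` is the always operator G). -/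
inductive LTL (AP : Type) : Type
  | tt : LTL AP
  | ff : LTL AP
  | atom (a : AP) : LTL AP
  | natom (a : AP) : LTL AP
  | or (φ ψ : LTL AP) : LTL AP
  | and (φ ψ : LTL AP) : LTL AP
  | next (φ : LTL AP) : LTL AP
  | untl (φ ψ : LTL AP) : LTL AP
  | rels (φ ψ : LTL AP) : LTL AP
  | ev (φ : LTL AP) : LTL AP
  | alw (φ : LTL AP) : LTL AP

namespace LTL
variable {AP : Type}

/-- Satisfaction of an LTL formula by an infinite word `u : ℕ → Set AP`. -/
def Sat : (ℕ → Set AP) → LTL AP → Prop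
  | _, .tt => True
  | _, .ff => False
  | u, .atom a => a ∈ u 0
  | u, .natom a => a ∉ u 0
  | u, .or φ ψ => Sat u φ ∨ Sat u ψ
  | u, .and φ ψ => Sat u φ ∧ Sat u ψ
  | u, .next φ => Sat (shift u 1) φ
  | u, .untl φ ψ => ∃ i, Sat (shift u i) ψ ∧ ∀ j < i, Sat (shift u j) φ
  | u, .rels φ ψ =>
      (∃ i, Sat (shift u i) φ ∧ ∀ j ≤ i, Sat (shift u j) ψ) ∨ ∀ i, Sat (shift u i) ψ
  | u, .ev φ => ∃ i, Sat (shift u i) φ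
  | u, .alw φ => ∀ i, Sat (shift u i) φ

/-- The set of atomic propositions occurring in a formula. -/
def apSet : LTL AP → Set AP
  | .tt | .ff => ∅
  | .atom a | .natom a => {a}
  | .or φ ψ | .and φ ψ | .untl φ ψ | .rels φ ψ => φ.apSet ∪ ψ.apSet
  | .next φ | .ev φ | .alw φ => φ.apSet

/-- The size of a formula (number of its subformula occurrences). -/
def size : LTL AP → ℕ
  | .tt | .ff | .atom _ | .natom _ => 1
  | .or φ ψ | .and φ ψ | .untl φ ψ | .rels φ ψ => φ.size + ψ.size + 1
  | .next φ | .ev φ | .alw φ => φ.size + 1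

/-- The list of subformulae of a formula (with multiplicities). -/
def subs : LTL AP → List (LTL AP)
  | .tt => [.tt]
  | .ff => [.ff]
  | .atom a => [.atom a]
  | .natom a => [.natom a]
  | .or φ ψ => .or φ ψ :: (φ.subs ++ ψ.subs)
  | .and φ ψ => .and φ ψ :: (φ.subs ++ ψ.subs)
  | .next φ => .next φ :: φ.subs
  | .untl φ ψ => .untl φ ψ :: (φ.subs ++ ψ.subs)
  | .rels φ ψ => .rels φ ψ :: (φ.subs ++ ψ.subs)
  | .ev φ => .ev φ :: φ.subs
  | .alw φ => .alw φ :: φ.subs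

/-- The set of subformulae of a formula. -/
def subsSet (φ : LTL AP) : Set (LTL AP) := {ψ | ψ ∈ φ.subs}

/-- A temporal formula: the topmost operator is neither `∧` nor `∨`. -/
def IsTemporal : LTL AP → Prop
  | .or _ _ => False
  | .and _ _ => False
  | _ => True

/-- A state formula: no temporal operator occurs in it. -/
def IsState : LTL AP → Prop
  | .tt | .ff | .atom _ | .natom _ => True
  | .or φ ψ | .and φ ψ => φ.IsState ∧ ψ.IsState
  | .next _ | .untl _ _ | .rels _ _ | .ev _ | .alw _ => False

/-- Test whether a formula is an `U`-formula. -/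
def isU : LTL AP → Bool
  | .untl _ _ => true
  | _ => false

/-- Test whether a formula is an `F`-formula. -/
def isEv : LTL AP → Bool
  | .ev _ => true
  | _ => false

/-- The disjunctive decomposition `ψ̄` of a formula, as a list of disjuncts,
each disjunct being a set of (temporal) formulae whose conjunction it stands for. -/
def dnfList : LTL AP → List (Set (LTL AP))
  | .or φ ψ => φ.dnfList ++ ψ.dnfList
  | .and φ ψ => φ.dnfList.flatMap (fun K₁ => ψ.dnfList.map (fun K₂ => K₁ ∪ K₂))
  | χ => [{χ}]

/-- The top-level conjuncts of a formula. -/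
def conjuncts : LTL AP → Set (LTL AP)
  | .and φ ψ => φ.conjuncts ∪ ψ.conjuncts
  | χ => {χ}

/-- The language of an LTL formula: all words over the alphabet `2^{AP(φ)}`
satisfying `φ`. -/
def Lang (φ : LTL AP) : Set (ℕ → Set AP) :=
  {u | (∀ i, u i ⊆ φ.apSet) ∧ φ.Sat u}

end LTL

/-- A transition of an alternating automaton: a source state, a letter,
a set of acceptance marks, and a destination configuration. -/
structure Trans (St Λ Mk : Type) where
  src : St
  lab : Λ
  marks : Set Mk
  dest : Set St

/-- Acceptance formulae: positive boolean combinations of `Fin m` and `Inf m`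
terms (with boolean constants). -/
inductive AccFormula (Mk : Type) : Type
  | tt : AccFormula Mk
  | ff : AccFormula Mk
  | fin (m : Mk) : AccFormula Mk
  | inf (m : Mk) : AccFormula Mk
  | and (φ ψ : AccFormula Mk) : AccFormula Mk
  | or (φ ψ : AccFormula Mk) : AccFormula Mk

namespace AccFormula
variable {Mk : Type}

/-- Satisfaction of an acceptance formula, given the set `I` of marks that
occur infinitely often. -/
def Sat (I : Set Mk) : AccFormula Mk → Prop
  | .tt => True
  | .ff => False
  | .fin m => m ∉ I
  | .inf m => m ∈ I
  | .and φ ψ => Sat I φ ∧ Sat I ψ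
  | .or φ ψ => Sat I φ ∨ Sat I ψ

/-- Marks occurring in `Fin` terms. -/
def finMarkSet : AccFormula Mk → Set Mk
  | .fin m => {m}
  | .and φ ψ | .or φ ψ => φ.finMarkSet ∪ ψ.finMarkSet
  | _ => ∅

/-- Marks occurring in `Inf` terms. -/
def infMarkSet : AccFormula Mk → Set Mk
  | .inf m => {m}
  | .and φ ψ | .or φ ψ => φ.infMarkSet ∪ ψ.infMarkSet
  | _ => ∅

/-- An acceptance formula is Inf-less if it contains no `Inf` terms. -/
def InfLess (Φ : AccFormula Mk) : Prop := Φ.infMarkSet = ∅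

end AccFormula

/-- A `Fin`/`Inf` term of an acceptance formula. -/
inductive AccTerm (Mk : Type) : Type
  | fin (m : Mk) : AccTerm Mk
  | inf (m : Mk) : AccTerm Mk

namespace AccFormula
variable {Mk : Type}

/-- The set of terms of an acceptance formula. -/
def terms : AccFormula Mk → Set (AccTerm Mk)
  | .fin m => {.fin m}
  | .inf m => {.inf m}
  | .and φ ψ | .or φ ψ => φ.terms ∪ ψ.terms
  | _ => ∅

/-- Evaluation of an acceptance formula where exactly the terms in `O` are true. -/
def evalTerms (O : Set (AccTerm Mk)) : AccFormula Mk → Prop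
  | .tt => True
  | .ff => False
  | .fin m => AccTerm.fin m ∈ O
  | .inf m => AccTerm.inf m ∈ O
  | .and φ ψ => evalTerms O φ ∧ evalTerms O ψ
  | .or φ ψ => evalTerms O φ ∨ evalTerms O ψ

/-- Minimal models of an acceptance formula: subsets of its terms satisfying it,
no proper subset of which satisfies it. -/
def MinModels (Φ : AccFormula Mk) : Set (Set (AccTerm Mk)) :=
  {O | O ⊆ Φ.terms ∧ Φ.evalTerms O ∧ ∀ O' ⊂ O, ¬ Φ.evalTerms O'}

end AccFormula

/-- `Fin`-marks of a model. -/
def finOf {Mk : Type} (O : Set (AccTerm Mk)) : Set Mk := {m | AccTerm.fin m ∈ O}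

/-- `Inf`-marks of a model. -/
def infOf {Mk : Type} (O : Set (AccTerm Mk)) : Set Mk := {m | AccTerm.inf m ∈ O}

/-- An alternating automaton with transition-based Emerson-Lei acceptance. -/
structure AltAutomaton (St Λ Mk : Type) where
  states : Set St
  alphabet : Set Λ
  marks : Set Mk
  delta : Set (Trans St Λ Mk)
  init : St
  acc : AccFormula Mk

variable {St Λ Mk : Type}

/-- Well-formedness of an alternating automaton: finiteness of the state set,
alphabet and mark set, and typing of the transition relation and acceptance
formula. -/
def AltAutomaton.WellFormed (A : AltAutomaton St Λ Mk) : Prop :=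
  A.states.Finite ∧ A.alphabet.Finite ∧ A.marks.Finite ∧ A.init ∈ A.states ∧
  (∀ t ∈ A.delta, t.src ∈ A.states ∧ t.lab ∈ A.alphabet ∧
      t.marks ⊆ A.marks ∧ t.dest ⊆ A.states) ∧
  A.acc.finMarkSet ∪ A.acc.infMarkSet ⊆ A.marks

/-- A self-loop alternating automaton: some partial order puts every
destination state of a transition below its source. -/
def AltAutomaton.IsSLAA (A : AltAutomaton St Λ Mk) : Prop :=
  ∃ le : St → St → Prop, IsPartialOrder St le ∧
    ∀ t ∈ A.delta, ∀ s ∈ t.dest, le s t.src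

/-- `T` is a multitransition under the letter `α`. -/
def IsMulti (T : Set (Trans St Λ Mk)) (α : Λ) : Prop :=
  (∀ t ∈ T, t.lab = α) ∧
  ∀ t₁ ∈ T, ∀ t₂ ∈ T, t₁.src = t₂.src → t₁ = t₂

/-- Source configuration of a multitransition. -/
def mdom (T : Set (Trans St Λ Mk)) : Set St := {s | ∃ t ∈ T, t.src = s}

/-- Destination configuration of a multitransition. -/
def mrange (T : Set (Trans St Λ Mk)) : Set St := {s | ∃ t ∈ T, s ∈ t.dest}

/-- Restriction of a multitransition to transitions whose source lies in `C`. -/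
def restrict (T : Set (Trans St Λ Mk)) (C : Set St) : Set (Trans St Λ Mk) :=
  {t | t ∈ T ∧ t.src ∈ C}

/-- A transition in `T` carries the mark `m`. -/
def markedBy (T : Set (Trans St Λ Mk)) (m : Mk) : Prop := ∃ t ∈ T, m ∈ t.marks

/-- `T` is `s`-escaping: it contains a non-looping transition with source `s`. -/
def escaping (T : Set (Trans St Λ Mk)) (s : St) : Prop :=
  ∃ t ∈ T, t.src = s ∧ s ∉ t.dest

/-- `ρ` is a run of `A` over the word `u`. -/
def AltAutomaton.IsRun (A : AltAutomaton St Λ Mk) (u : ℕ → Λ)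
    (ρ : ℕ → Set (Trans St Λ Mk)) : Prop :=
  mdom (ρ 0) = {A.init} ∧
  ∀ i, ρ i ⊆ A.delta ∧ IsMulti (ρ i) (u i) ∧ mrange (ρ i) = mdom (ρ (i + 1))

/-- An infinite branch of a sequence of multitransitions: at every level `i`
it follows a transition of `ρ i`, starting at level 0. -/
def IsInfBranch (ρ : ℕ → Set (Trans St Λ Mk)) (b : ℕ → Trans St Λ Mk) : Prop :=
  ∀ i, b i ∈ ρ i ∧ (b (i + 1)).src ∈ (b i).dest

/-- The set `M(b)` of marks occurring infinitely often along a branch. -/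
def infMarks (b : ℕ → Trans St Λ Mk) : Set Mk :=
  {m | ∀ N, ∃ i, N ≤ i ∧ m ∈ (b i).marks}

/-- An accepting run: a run all of whose infinite branches satisfy the
acceptance formula. -/
def AltAutomaton.IsAccRun (A : AltAutomaton St Λ Mk) (u : ℕ → Λ)
    (ρ : ℕ → Set (Trans St Λ Mk)) : Prop :=
  A.IsRun u ρ ∧ ∀ b, IsInfBranch ρ b → A.acc.Sat (infMarks b)

/-- The language of an alternating automaton. -/
def AltAutomaton.Lang (A : AltAutomaton St Λ Mk) : Set (ℕ → Λ) :=
  {u | (∀ i, u i ∈ A.alphabet) ∧ ∃ ρ, A.IsAccRun u ρ}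

/-- Product of two sets of (marks, configuration) pairs. -/
def otimes {Mk St : Type} (P Q : Set (Set Mk × Set St)) : Set (Set Mk × Set St) :=
  {r | ∃ p ∈ P, ∃ q ∈ Q, r = (p.1 ∪ q.1, p.2 ∪ q.2)}

/-- Marks eraser. -/
def me {Mk St : Type} (P : Set (Set Mk × Set St)) : Set (Set Mk × Set St) :=
  {r | ∃ p ∈ P, r = ((∅ : Set Mk), p.2)}

/-- The transition function of the basic translation (with a single co-Büchi
mark `()`); `F ψ` is handled as `tt U ψ` and `G ψ` as `ff R ψ`. -/
def basicDelta {AP : Type} : LTL AP → Set AP → Set (Set Unit × Set (LTL AP))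
  | .tt, _ => {((∅ : Set Unit), (∅ : Set (LTL AP)))}
  | .ff, _ => ∅
  | .atom a, α => {p | p = ((∅ : Set Unit), (∅ : Set (LTL AP))) ∧ a ∈ α}
  | .natom a, α => {p | p = ((∅ : Set Unit), (∅ : Set (LTL AP))) ∧ a ∉ α}
  | .and φ ψ, α => me (otimes (basicDelta φ α) (basicDelta ψ α))
  | .or φ ψ, α => me (basicDelta φ α ∪ basicDelta ψ α)
  | .next φ, _ => {((∅ : Set Unit), ({φ} : Set (LTL AP)))}
  | .untl φ ψ, α =>
      me (basicDelta ψ α) ∪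
        otimes {(({()} : Set Unit), ({LTL.untl φ ψ} : Set (LTL AP)))} (me (basicDelta φ α))
  | .ev ψ, α =>
      me (basicDelta ψ α) ∪
        otimes {(({()} : Set Unit), ({LTL.ev ψ} : Set (LTL AP)))}
          (me {((∅ : Set Unit), (∅ : Set (LTL AP)))})
  | .rels φ ψ, α =>
      me (otimes (basicDelta φ α) (basicDelta ψ α)) ∪
        me (otimes {((∅ : Set Unit), ({LTL.rels φ ψ} : Set (LTL AP)))} (basicDelta ψ α))
  | .alw ψ, α =>
      me (otimes (∅ : Set (Set Unit × Set (LTL AP))) (basicDelta ψ α)) ∪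
        me (otimes {((∅ : Set Unit), ({LTL.alw ψ} : Set (LTL AP)))} (basicDelta ψ α))

/-- Product over a set `K` of formulae, given a transition set `d χ` for each
formula `χ`. -/
def setOtimes {AP Mk : Type} (d : LTL AP → Set (Set Mk × Set (LTL AP)))
    (K : Set (LTL AP)) : Set (Set Mk × Set (LTL AP)) :=
  {r | ∃ f : LTL AP → Set Mk × Set (LTL AP), (∀ χ ∈ K, f χ ∈ d χ) ∧
        r = (⋃ χ ∈ K, (f χ).1, ⋃ χ ∈ K, (f χ).2)}

/-- `Δ(ψ_K, α)` where `ψ_K` is the conjunction of all formulae in `K`: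
for a singleton `K = {χ}` it is `Δ(χ, α)`, otherwise the `∧`-rule erases
the marks of the product. -/
def conjDelta {AP Mk : Type} (d : LTL AP → Set (Set Mk × Set (LTL AP)))
    (K : Set (LTL AP)) : Set (Set Mk × Set (LTL AP)) :=
  {r | (∃ χ, K = {χ} ∧ r ∈ d χ) ∨ ((¬ ∃ χ, K = {χ}) ∧ r ∈ me (setOtimes d K))}

/-- Looping transitions of `ψ_K` (destination subsumes `K`), with `K` removed
from the destination. -/
def deltaL {AP Mk : Type} (d : LTL AP → Set (Set Mk × Set (LTL AP)))
    (K : Set (LTL AP)) : Set (Set Mk × Set (LTL AP)) :=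
  {r | ∃ p ∈ conjDelta d K, K ⊆ p.2 ∧ r = (p.1, p.2 \ K)}

/-- Non-looping transitions of `ψ_K`. -/
def deltaNL {AP Mk : Type} (d : LTL AP → Set (Set Mk × Set (LTL AP)))
    (K : Set (LTL AP)) : Set (Set Mk × Set (LTL AP)) :=
  {p | p ∈ conjDelta d K ∧ ¬ K ⊆ p.2}

/-- Acceptance marks of the F-merging translation: the co-Büchi mark and the
orange marks `o^K_{Fψ}`. -/
inductive FMark (AP : Type) : Type
  | base : FMark AP
  | orange (ψ : LTL AP) (K : Set (LTL AP)) : FMark AP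

/-- The set of orange marks `M_K = {o^{K'}_{Fψ} | K' ∈ ψ̄, K' ≠ K}`. -/
def fMK {AP : Type} (ψ : LTL AP) (K : Set (LTL AP)) : Set (FMark AP) :=
  {m | ∃ K', K' ∈ ψ.dnfList ∧ K' ≠ K ∧ m = FMark.orange ψ K'}

/-- The transition function of the F-merging translation. -/
def fmergeDelta {AP : Type} : LTL AP → Set AP → Set (Set (FMark AP) × Set (LTL AP))
  | .tt, _ => {((∅ : Set (FMark AP)), (∅ : Set (LTL AP)))}
  | .ff, _ => ∅
  | .atom a, α => {p | p = ((∅ : Set (FMark AP)), (∅ : Set (LTL AP))) ∧ a ∈ α}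
  | .natom a, α => {p | p = ((∅ : Set (FMark AP)), (∅ : Set (LTL AP))) ∧ a ∉ α}
  | .and φ ψ, α => me (otimes (fmergeDelta φ α) (fmergeDelta ψ α))
  | .or φ ψ, α => me (fmergeDelta φ α ∪ fmergeDelta ψ α)
  | .next φ, _ => {((∅ : Set (FMark AP)), ({φ} : Set (LTL AP)))}
  | .untl φ ψ, α =>
      me (fmergeDelta ψ α) ∪
        otimes {(({FMark.base} : Set (FMark AP)), ({LTL.untl φ ψ} : Set (LTL AP)))}
          (me (fmergeDelta φ α))
  | .rels φ ψ, α =>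
      me (otimes (fmergeDelta φ α) (fmergeDelta ψ α)) ∪
        me (otimes {((∅ : Set (FMark AP)), ({LTL.rels φ ψ} : Set (LTL AP)))} (fmergeDelta ψ α))
  | .alw ψ, α =>
      me (otimes (∅ : Set (Set (FMark AP) × Set (LTL AP))) (fmergeDelta ψ α)) ∪
        me (otimes {((∅ : Set (FMark AP)), ({LTL.alw ψ} : Set (LTL AP)))} (fmergeDelta ψ α))
  | .ev ψ, α =>
      {(({FMark.base} : Set (FMark AP)), ({LTL.ev ψ} : Set (LTL AP)))} ∪
      {r | ∃ K, K ∈ ψ.dnfList ∧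
            (r ∈ me (deltaNL (fun χ => if _h : χ.size ≤ ψ.size then fmergeDelta χ α else ∅) K) ∨
             r ∈ otimes {((fMK ψ K : Set (FMark AP)), ({LTL.ev ψ} : Set (LTL AP)))}
                   (deltaL (fun χ => if _h : χ.size ≤ ψ.size then fmergeDelta χ α else ∅) K))}
termination_by φ _ => φ.size
decreasing_by
  all_goals simp [LTL.size] at *
  all_goals omega

/-- Acceptance marks of the F,G-merging translation: `f ψ` stands for the
mark `f_ψ`, `e ψ` for the escape mark `e_ψ` and `o ψ K` for `o^K_{Fψ}`. -/
inductive FGMark (AP : Type) : Type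
  | f (ψ : LTL AP) : FGMark AP
  | e (ψ : LTL AP) : FGMark AP
  | o (ψ : LTL AP) (K : Set (LTL AP)) : FGMark AP

/-- `M_K = {o^{K'}_{Fψ} | K' ∈ ψ̄, K' ≠ K}` for the F,G-merging translation. -/
def fgMK {AP : Type} (ψ : LTL AP) (K : Set (LTL AP)) : Set (FGMark AP) :=
  {m | ∃ K', K' ∈ ψ.dnfList ∧ K' ≠ K ∧ m = FGMark.o ψ K'}

/-- A formula whose topmost operator is `U` or `F`. -/
def IsUF {AP : Type} : LTL AP → Prop
  | .untl _ _ => True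
  | .ev _ => True
  | _ => False

/-- `Δ'_L`: looping transitions of `ψ'`, with `ψ'` removed from the
destination. -/
def dPrimeL {AP Mk : Type} (d : Set (Set Mk × Set (LTL AP))) (χ : LTL AP) :
    Set (Set Mk × Set (LTL AP)) :=
  {r | ∃ p ∈ d, χ ∈ p.2 ∧ r = (p.1, p.2 \ {χ})}

/-- `Δ'_NL`: non-looping transitions of `ψ'`, marked with the escape mark. -/
def dPrimeNL {AP : Type} (d : Set (Set (FGMark AP) × Set (LTL AP))) (χ : LTL AP) :
    Set (Set (FGMark AP) × Set (LTL AP)) :=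
  {r | ∃ p ∈ d, χ ∉ p.2 ∧ r = (({FGMark.e χ} : Set (FGMark AP)), p.2)}

/-- `Δ'(ψ', α)` used in the `G`-rule of the F,G-merging translation, where
`d = Δ(ψ', α)`. -/
def deltaPrime {AP : Type} (d : Set (Set (FGMark AP) × Set (LTL AP))) (χ : LTL AP) :
    Set (Set (FGMark AP) × Set (LTL AP)) :=
  {r | (IsUF χ ∧ r ∈ dPrimeL d χ ∪ dPrimeNL d χ) ∨
       (¬ IsUF χ ∧ ∃ p ∈ d, r = (p.1, p.2 \ {χ}))}

/-- The transition function of the F,G-merging translation. -/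
def fgDelta {AP : Type} : LTL AP → Set AP → Set (Set (FGMark AP) × Set (LTL AP))
  | .tt, _ => {((∅ : Set (FGMark AP)), (∅ : Set (LTL AP)))}
  | .ff, _ => ∅
  | .atom a, α => {p | p = ((∅ : Set (FGMark AP)), (∅ : Set (LTL AP))) ∧ a ∈ α}
  | .natom a, α => {p | p = ((∅ : Set (FGMark AP)), (∅ : Set (LTL AP))) ∧ a ∉ α}
  | .and φ ψ, α => me (otimes (fgDelta φ α) (fgDelta ψ α))
  | .or φ ψ, α => me (fgDelta φ α ∪ fgDelta ψ α)
  | .next φ, _ => {((∅ : Set (FGMark AP)), ({φ} : Set (LTL AP)))}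
  | .untl φ ψ, α =>
      me (fgDelta ψ α) ∪
        otimes {(({FGMark.f (LTL.untl φ ψ)} : Set (FGMark AP)), ({LTL.untl φ ψ} : Set (LTL AP)))}
          (me (fgDelta φ α))
  | .rels φ ψ, α =>
      me (otimes (fgDelta φ α) (fgDelta ψ α)) ∪
        me (otimes {((∅ : Set (FGMark AP)), ({LTL.rels φ ψ} : Set (LTL AP)))} (fgDelta ψ α))
  | .ev ψ, α =>
      {(({FGMark.f (LTL.ev ψ)} : Set (FGMark AP)), ({LTL.ev ψ} : Set (LTL AP)))} ∪
      {r | ∃ K, K ∈ ψ.dnfList ∧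
            (r ∈ me (deltaNL (fun χ => if _h : χ.size ≤ ψ.size then fgDelta χ α else ∅) K) ∨
             r ∈ otimes {((fgMK ψ K : Set (FGMark AP)), ({LTL.ev ψ} : Set (LTL AP)))}
                   (deltaL (fun χ => if _h : χ.size ≤ ψ.size then fgDelta χ α else ∅) K))}
  | .alw ψ, α =>
      {r | ((∀ χ ∈ ψ.conjuncts, χ.IsTemporal ∨ χ.IsState) ∧
              r ∈ otimes {((∅ : Set (FGMark AP)), ({LTL.alw ψ} : Set (LTL AP)))}
                    (setOtimes
                      (fun χ => deltaPrime (if _h : χ.size ≤ ψ.size then fgDelta χ α else ∅) χ)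
                      ψ.conjuncts)) ∨
           ((¬ ∀ χ ∈ ψ.conjuncts, χ.IsTemporal ∨ χ.IsState) ∧
              r ∈ me (otimes (∅ : Set (Set (FGMark AP) × Set (LTL AP))) (fgDelta ψ α)) ∪
                  me (otimes {((∅ : Set (FGMark AP)), ({LTL.alw ψ} : Set (LTL AP)))} (fgDelta ψ α)))}
termination_by φ _ => φ.size
decreasing_by
  all_goals simp [LTL.size] at *
  all_goals omega

/-- Big disjunction of a list of acceptance formulae. -/
def bigAndAcc {Mk : Type} (l : List (AccFormula Mk)) : AccFormula Mk :=
  l.foldr AccFormula.and AccFormula.tt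

def bigOrAcc {Mk : Type} (l : List (AccFormula Mk)) : AccFormula Mk :=
  l.foldr AccFormula.or AccFormula.ff

/-- The co-Büchi SLAA produced by the basic translation of `φ`. -/
def basicSLAA {AP : Type} (φ : LTL AP) : AltAutomaton (LTL AP) (Set AP) Unit where
  states := φ.subsSet
  alphabet := {α | α ⊆ φ.apSet}
  marks := {()}
  delta := {t | t.src ∈ φ.subsSet ∧ t.lab ⊆ φ.apSet ∧ (t.marks, t.dest) ∈ basicDelta t.src t.lab}
  init := φ
  acc := AccFormula.fin ()

/-- The acceptance formula of the F-merging translation: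
`Fin m ∧ ⋀_{Fψ} ⋁_{K ∈ ψ̄} Fin o^K_{Fψ}`. -/
def fmergeAcc {AP : Type} (φ : LTL AP) : AccFormula (FMark AP) :=
  AccFormula.and (AccFormula.fin FMark.base)
    (bigAndAcc ((φ.subs.filter LTL.isEv).map (fun χ =>
      match χ with
      | LTL.ev ψ => bigOrAcc (ψ.dnfList.map (fun K => AccFormula.fin (FMark.orange ψ K)))
      | _ => AccFormula.tt)))

/-- The Inf-less SLAA produced by the F-merging translation of `φ`. -/
def fmergeSLAA {AP : Type} (φ : LTL AP) : AltAutomaton (LTL AP) (Set AP) (FMark AP) where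
  states := φ.subsSet
  alphabet := {α | α ⊆ φ.apSet}
  marks := {FMark.base} ∪
    {m | ∃ ψ, LTL.ev ψ ∈ φ.subsSet ∧ ∃ K, K ∈ ψ.dnfList ∧ m = FMark.orange ψ K}
  delta := {t | t.src ∈ φ.subsSet ∧ t.lab ⊆ φ.apSet ∧ (t.marks, t.dest) ∈ fmergeDelta t.src t.lab}
  init := φ
  acc := fmergeAcc φ

/-- The acceptance formula of the F,G-merging translation:
`⋀_{ψ ∈ U_φ} (Fin f_ψ ∨ Inf e_ψ) ∧
 ⋀_{Fψ ∈ F_φ} ((Fin f_{Fψ} ∧ ⋁_{K ∈ ψ̄} Fin o^K_{Fψ}) ∨ Inf e_{Fψ})`. -/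
def fgAcc {AP : Type} (φ : LTL AP) : AccFormula (FGMark AP) :=
  AccFormula.and
    (bigAndAcc ((φ.subs.filter LTL.isU).map (fun ψ =>
      AccFormula.or (AccFormula.fin (FGMark.f ψ)) (AccFormula.inf (FGMark.e ψ)))))
    (bigAndAcc ((φ.subs.filter LTL.isEv).map (fun χ =>
      match χ with
      | LTL.ev ψ =>
          AccFormula.or
            (AccFormula.and (AccFormula.fin (FGMark.f (LTL.ev ψ)))
              (bigOrAcc (ψ.dnfList.map (fun K => AccFormula.fin (FGMark.o ψ K)))))
            (AccFormula.inf (FGMark.e (LTL.ev ψ)))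
      | _ => AccFormula.tt)))

/-- The set of acceptance marks of the F,G-merging translation. -/
def fgMarks {AP : Type} (φ : LTL AP) : Set (FGMark AP) :=
  {m | ∃ ψ₁ ψ₂, LTL.untl ψ₁ ψ₂ ∈ φ.subsSet ∧
        (m = FGMark.f (LTL.untl ψ₁ ψ₂) ∨ m = FGMark.e (LTL.untl ψ₁ ψ₂))} ∪
  {m | ∃ ψ, LTL.ev ψ ∈ φ.subsSet ∧
        (m = FGMark.f (LTL.ev ψ) ∨ m = FGMark.e (LTL.ev ψ) ∨
         ∃ K, K ∈ ψ.dnfList ∧ m = FGMark.o ψ K)}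

/-- The SLAA produced by the F,G-merging translation of `φ`. -/
def fgSLAA {AP : Type} (φ : LTL AP) : AltAutomaton (LTL AP) (Set AP) (FGMark AP) where
  states := φ.subsSet
  alphabet := {α | α ⊆ φ.apSet}
  marks := fgMarks φ
  delta := {t | t.src ∈ φ.subsSet ∧ t.lab ⊆ φ.apSet ∧ (t.marks, t.dest) ∈ fgDelta t.src t.lab}
  init := φ
  acc := fgAcc φ

/-- Big syntactic disjunction / conjunction of lists of LTL formulae. -/
def bigOrL {AP : Type} (l : List (LTL AP)) : LTL AP := l.foldr LTL.or LTL.ff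

def bigAndL {AP : Type} (l : List (LTL AP)) : LTL AP := l.foldr LTL.and LTL.tt

/-- `l` is a list enumerating exactly the elements of the set `S`. -/
def ListEnum {α : Type} (l : List α) (S : Set α) : Prop := ∀ x, x ∈ l ↔ x ∈ S

/-- `ψ` is a syntactic disjunction (resp. conjunction) of an enumeration of `G`. -/
def EnumOr {AP : Type} (G : Set (LTL AP)) (ψ : LTL AP) : Prop :=
  ∃ l, ListEnum l G ∧ ψ = bigOrL l

def EnumAnd {AP : Type} (G : Set (LTL AP)) (ψ : LTL AP) : Prop :=
  ∃ l, ListEnum l G ∧ ψ = bigAndL l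

/-- `ψ` is the formula `φ_α = ⋀_{a ∈ α} a ∧ ⋀_{a ∈ AP' ∖ α} ¬a`. -/
def LetterForm {AP : Type} (AP' α : Set AP) (ψ : LTL AP) : Prop :=
  EnumAnd ({χ | ∃ a ∈ α, χ = LTL.atom a} ∪ {χ | ∃ a ∈ AP' \ α, χ = LTL.natom a}) ψ

section SLAAtoLTL

variable {AP St Mk : Type}

/-- `χ` is the component formula `φ_α ∧ X φ(C ∖ {s})` of a looping transition `t`. -/
def CompLoop (AP' : Set AP) (F : St → LTL AP) (t : Trans St (Set AP) Mk)
    (χ : LTL AP) : Prop :=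
  ∃ ℓ ξ, LetterForm AP' t.lab ℓ ∧ EnumAnd (F '' (t.dest \ {t.src})) ξ ∧
    χ = LTL.and ℓ (LTL.next ξ)

/-- `χ` is the component formula `φ_α ∧ X φ(C)` of a non-looping transition `t`. -/
def CompNonLoop (AP' : Set AP) (F : St → LTL AP) (t : Trans St (Set AP) Mk)
    (χ : LTL AP) : Prop :=
  ∃ ℓ ξ, LetterForm AP' t.lab ℓ ∧ EnumAnd (F '' t.dest) ξ ∧
    χ = LTL.and ℓ (LTL.next ξ)

/-- Looping transitions of `A` from `s`. -/
def loopTrans {Λ' Mk' : Type} (A : AltAutomaton St Λ' Mk') (s : St) : Set (Trans St Λ' Mk') :=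
  {t | t ∈ A.delta ∧ t.src = s ∧ s ∈ t.dest}

/-- Non-looping transitions of `A` from `s`. -/
def nonloopTrans {Λ' Mk' : Type} (A : AltAutomaton St Λ' Mk') (s : St) : Set (Trans St Λ' Mk') :=
  {t | t ∈ A.delta ∧ t.src = s ∧ s ∉ t.dest}

/-- `ψ₁` is the formula
`(⋁_{loops} φ_α ∧ X φ(C∖{s})) U (⋁_{non-loops} φ_α ∧ X φ(C))`. -/
def Phi1Spec (AP' : Set AP) (A : AltAutomaton St (Set AP) Mk) (F : St → LTL AP)
    (s : St) (ψ₁ : LTL AP) : Prop :=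
  ∃ l₁ l₂ c₁ c₂, ListEnum l₁ (loopTrans A s) ∧ ListEnum l₂ (nonloopTrans A s) ∧
    List.Forall₂ (CompLoop AP' F) l₁ c₁ ∧ List.Forall₂ (CompNonLoop AP' F) l₂ c₂ ∧
    ψ₁ = LTL.untl (bigOrL c₁) (bigOrL c₂)

/-- `ψ₂` is the formula `G ⋁_{loops} φ_α ∧ X φ(C∖{s})`. -/
def Phi2Spec (AP' : Set AP) (A : AltAutomaton St (Set AP) Mk) (F : St → LTL AP)
    (s : St) (ψ₂ : LTL AP) : Prop :=
  ∃ l c, ListEnum l (loopTrans A s) ∧ List.Forall₂ (CompLoop AP' F) l c ∧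
    ψ₂ = LTL.alw (bigOrL c)

/-- `ξ` is the conjunct `GF ⋁_{loops marked by m} φ_α ∧ X φ(C∖{s})`. -/
def GFSpec (AP' : Set AP) (A : AltAutomaton St (Set AP) Mk) (F : St → LTL AP)
    (s : St) (m : Mk) (ξ : LTL AP) : Prop :=
  ∃ l c, ListEnum l {t | t ∈ loopTrans A s ∧ m ∈ t.marks} ∧
    List.Forall₂ (CompLoop AP' F) l c ∧ ξ = LTL.alw (LTL.ev (bigOrL c))

/-- `ξ` is the conjunct `FG ⋁_{loops not marked by m} φ_α ∧ X φ(C∖{s})`. -/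
def FGSpec (AP' : Set AP) (A : AltAutomaton St (Set AP) Mk) (F : St → LTL AP)
    (s : St) (m : Mk) (ξ : LTL AP) : Prop :=
  ∃ l c, ListEnum l {t | t ∈ loopTrans A s ∧ m ∉ t.marks} ∧
    List.Forall₂ (CompLoop AP' F) l c ∧ ξ = LTL.ev (LTL.alw (bigOrL c))

/-- `χ` is the disjunct of `φ₃(s)` corresponding to the minimal model `O`. -/
def ModelSpec (AP' : Set AP) (A : AltAutomaton St (Set AP) Mk) (F : St → LTL AP)
    (s : St) (O : Set (AccTerm Mk)) (χ : LTL AP) : Prop :=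
  ∃ linf lfin cinf cfin, ListEnum linf (infOf O) ∧ ListEnum lfin (finOf O) ∧
    List.Forall₂ (GFSpec AP' A F s) linf cinf ∧
    List.Forall₂ (FGSpec AP' A F s) lfin cfin ∧
    χ = LTL.and (bigAndL cinf) (bigAndL cfin)

/-- `ψ₃` is the disjunction over all minimal models of the acceptance formula. -/
def Phi3Spec (AP' : Set AP) (A : AltAutomaton St (Set AP) Mk) (F : St → LTL AP)
    (s : St) (ψ₃ : LTL AP) : Prop :=
  ∃ lm c, ListEnum lm A.acc.MinModels ∧
    List.Forall₂ (ModelSpec AP' A F s) lm c ∧ ψ₃ = bigOrL c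

/-- `F` is a result of the inductive SLAA-to-LTL translation: for every state
`s`, `F s = φ₁(s) ∨ (φ₂(s) ∧ φ₃(s))` as constructed from the transitions of
`A` and the minimal models of its acceptance formula. -/
def IsTranslation (AP' : Set AP) (A : AltAutomaton St (Set AP) Mk)
    (F : St → LTL AP) : Prop :=
  ∀ s ∈ A.states, ∃ ψ₁ ψ₂ ψ₃,
    Phi1Spec AP' A F s ψ₁ ∧ Phi2Spec AP' A F s ψ₂ ∧ Phi3Spec AP' A F s ψ₃ ∧
    F s = LTL.or ψ₁ (LTL.and ψ₂ ψ₃)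

end SLAAtoLTL

theorem _root_.Antitone.exists_forall_ge_eq_of_finite_range {ι α : Type*} [Preorder ι]
    [Nonempty ι] [PartialOrder α] {f : ι → α} (hf : Antitone f) (hfin : (Set.range f).Finite) :
    ∃ N, ∀ i ≥ N, f i = f N := by
  obtain ⟨N, -, hN⟩ :=
    Set.Finite.exists_minimalFor' f Set.univ (by rwa [Set.image_univ]) Set.univ_nonempty
  exact ⟨N, fun i hi => (hf hi).antisymm (hN trivial (hf hi))⟩

theorem AltAutomaton.IsSLAA.exists_partialOrder {A : AltAutomaton St Λ Mk} (h : A.IsSLAA) :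
    ∃ _ : PartialOrder St, ∀ t ∈ A.delta, ∀ s ∈ t.dest, s ≤ t.src := by
  obtain ⟨le, hpo, hle⟩ := h
  exact ⟨{ le := le, le_refl := hpo.refl, le_trans := hpo.trans, le_antisymm := hpo.antisymm },
    hle⟩

namespace IsInfBranch

variable {A : AltAutomaton St Λ Mk} {u : ℕ → Λ} {ρ : ℕ → Set (Trans St Λ Mk)}
  {b : ℕ → Trans St Λ Mk}

theorem mem_delta (hρ : A.IsRun u ρ) (hb : IsInfBranch ρ b) (i : ℕ) : b i ∈ A.delta :=
  (hρ.2 i).1 (hb i).1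

theorem antitone_src [PartialOrder St] (hle : ∀ t ∈ A.delta, ∀ s ∈ t.dest, s ≤ t.src)
    (hρ : A.IsRun u ρ) (hb : IsInfBranch ρ b) : Antitone fun i => (b i).src :=
  antitone_nat_of_succ_le fun i => hle _ (hb.mem_delta hρ i) _ (hb i).2

/-- The sources along `b` descend in the SLAA order through a finite set of states, so they
stabilise at some state `s`; from then on every transition of `b` leads from `s` back to `s`. -/
theorem exists_forall_ge_src_mem_dest (hwf : A.WellFormed) (hslaa : A.IsSLAA)
    (hρ : A.IsRun u ρ) (hb : IsInfBranch ρ b) : ∃ N, ∀ i ≥ N, (b i).src ∈ (b i).dest := by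
  obtain ⟨_, hle⟩ := hslaa.exists_partialOrder
  have hfin : (Set.range fun i => (b i).src).Finite :=
    hwf.1.subset (Set.range_subset_iff.2 fun i => (hwf.2.2.2.2.1 _ (hb.mem_delta hρ i)).1)
  obtain ⟨N, hN⟩ := (hb.antitone_src hle hρ).exists_forall_ge_eq_of_finite_range hfin
  refine ⟨N, fun i hi => ?_⟩
  have hstep := (hb i).2
  rwa [hN (i + 1) (by omega), ← hN i hi] at hstep

end IsInfBranch

/-- Every mark occurring infinitely often on an infinite
branch of a run of an SLAA belongs to the mark set of some looping transition;
in particular, marks occurring only on non-looping transitions occur at most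
finitely often on every branch. -/
theorem inf_marks_on_looping_transitions {St Λ Mk : Type}
    (A : AltAutomaton St Λ Mk) (hwf : A.WellFormed) (hslaa : A.IsSLAA)
    (u : ℕ → Λ) (ρ : ℕ → Set (Trans St Λ Mk)) (hρ : A.IsRun u ρ)
    (b : ℕ → Trans St Λ Mk) (hb : IsInfBranch ρ b) :
    (∀ m ∈ infMarks b, ∃ t ∈ A.delta, t.src ∈ t.dest ∧ m ∈ t.marks) ∧
    (∀ m : Mk, (∀ t ∈ A.delta, m ∈ t.marks → t.src ∉ t.dest) →
      m ∉ infMarks b) := by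
  obtain ⟨N, hloop⟩ := hb.exists_forall_ge_src_mem_dest hwf hslaa hρ
  have hmarks : ∀ m ∈ infMarks b, ∃ t ∈ A.delta, t.src ∈ t.dest ∧ m ∈ t.marks := by
    intro m hm
    obtain ⟨i, hi, hmi⟩ := hm N
    exact ⟨b i, hb.mem_delta hρ i, hloop i hi, hmi⟩
  refine ⟨hmarks, fun m hnonloop hm => ?_⟩
  obtain ⟨t, ht, hloop_t, hmt⟩ := hmarks m hm
  exact hnonloop t ht hmt hloop_t

end SLAA
end

section
/- Let A be an SLAA and m an acceptance mark that does not belong to the mark set of any looping transition of A. Let A' be the automaton obtained from A by replacing every transition (s,α,M,C) with (s,α,M∖{m},C) while keeping the same acceptance formula Φ. Then L(A') = L(A). -/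
set_option maxHeartbeats 1000000

namespace SLAA

variable {St Λ Mk : Type}

/-! In an SLAA the states visited along a branch of a run decrease in a partial order on a finite
set, so they are eventually constant and from some point on the branch takes only looping
transitions. A mark carried by no looping transition therefore occurs only finitely often on
every branch, and erasing it changes no set `M(b)`. Runs transfer in both directions by erasing
the mark, resp. by choosing for each transition of the new automaton a preimage in the old one. -/

def AltAutomaton.IsPath (A : AltAutomaton St Λ Mk) (b : ℕ → Trans St Λ Mk) : Prop :=
  ∀ i, b i ∈ A.delta ∧ (b (i + 1)).src ∈ (b i).dest

lemma AltAutomaton.IsRun.isPath {A : AltAutomaton St Λ Mk} {u : ℕ → Λ}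
    {ρ : ℕ → Set (Trans St Λ Mk)} {b : ℕ → Trans St Λ Mk} (hρ : A.IsRun u ρ)
    (hb : IsInfBranch ρ b) : A.IsPath b :=
  fun i => ⟨(hρ.2 i).1 (hb i).1, (hb i).2⟩

lemma AltAutomaton.IsPath.eventually_looping {A : AltAutomaton St Λ Mk}
    {b : ℕ → Trans St Λ Mk} (hslaa : A.IsSLAA) (hfin : A.states.Finite)
    (hsrc : ∀ t ∈ A.delta, t.src ∈ A.states) (hb : A.IsPath b) :
    ∃ N, ∀ i, N ≤ i → (b i).src ∈ (b i).dest := by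
  obtain ⟨le, hle, hdesc⟩ := hslaa
  let _ : PartialOrder St :=
    { le := le
      le_refl := refl_of le
      le_trans := fun _ _ _ => trans_of le
      le_antisymm := fun _ _ => antisymm_of le }
  have : Finite A.states := hfin.to_subtype
  let s : ℕ → A.states := fun i => ⟨(b i).src, hsrc _ (hb i).1⟩
  have hs : Antitone s :=
    antitone_nat_of_succ_le fun i => hdesc _ (hb i).1 _ (hb i).2
  obtain ⟨N, hN⟩ := WellFoundedLT.antitone_chain_condition hs
  refine ⟨N, fun i hi => ?_⟩
  have hconst : (b (i + 1)).src = (b i).src :=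
    congrArg Subtype.val ((hN (i + 1) (by omega)).symm.trans (hN i hi))
  exact hconst ▸ (hb i).2

lemma AltAutomaton.IsPath.notMem_infMarks {A : AltAutomaton St Λ Mk}
    {b : ℕ → Trans St Λ Mk} {m : Mk} (hslaa : A.IsSLAA) (hfin : A.states.Finite)
    (hsrc : ∀ t ∈ A.delta, t.src ∈ A.states) (hb : A.IsPath b)
    (h : ∀ t ∈ A.delta, t.src ∈ t.dest → m ∉ t.marks) : m ∉ infMarks b := by
  obtain ⟨N, hN⟩ := hb.eventually_looping hslaa hfin hsrc
  intro hm
  obtain ⟨i, hi, hmi⟩ := hm N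
  exact h _ (hb i).1 (hN i hi) hmi

def eraseMark (m : Mk) (t : Trans St Λ Mk) : Trans St Λ Mk :=
  { t with marks := t.marks \ {m} }

lemma infMarks_eraseMark (m : Mk) (b : ℕ → Trans St Λ Mk) :
    infMarks (eraseMark m ∘ b) = infMarks b \ {m} := by
  ext m'
  simp only [infMarks, eraseMark, Function.comp_apply, Set.mem_sdiff, Set.mem_singleton_iff,
    Set.mem_ofPred_eq]
  constructor
  · intro hm'
    obtain ⟨_, -, -, hne⟩ := hm' 0
    exact ⟨fun N => (hm' N).imp fun _ ⟨hi, hmem, _⟩ => ⟨hi, hmem⟩, hne⟩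
  · rintro ⟨hm', hne⟩ N
    exact (hm' N).imp fun _ ⟨hi, hmem⟩ => ⟨hi, hmem, hne⟩

def IsMarkRelabelling (A B : AltAutomaton St Λ Mk) (f : Trans St Λ Mk → Trans St Λ Mk) : Prop :=
  ∀ t ∈ A.delta, f t ∈ B.delta ∧ (f t).src = t.src ∧ (f t).lab = t.lab ∧ (f t).dest = t.dest

section Image

variable {T : Set (Trans St Λ Mk)} {f : Trans St Λ Mk → Trans St Λ Mk}

lemma mdom_image (hf : ∀ t ∈ T, (f t).src = t.src) : mdom (f '' T) = mdom T := by
  ext s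
  constructor
  · rintro ⟨_, ⟨t, ht, rfl⟩, rfl⟩
    exact ⟨t, ht, (hf t ht).symm⟩
  · rintro ⟨t, ht, rfl⟩
    exact ⟨f t, ⟨t, ht, rfl⟩, hf t ht⟩

lemma mrange_image (hf : ∀ t ∈ T, (f t).dest = t.dest) : mrange (f '' T) = mrange T := by
  ext s
  constructor
  · rintro ⟨_, ⟨t, ht, rfl⟩, hs⟩
    exact ⟨t, ht, hf t ht ▸ hs⟩
  · rintro ⟨t, ht, hs⟩
    exact ⟨f t, ⟨t, ht, rfl⟩, (hf t ht).symm ▸ hs⟩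

lemma IsMulti.image {α : Λ} (hT : IsMulti T α) (hsrc : ∀ t ∈ T, (f t).src = t.src)
    (hlab : ∀ t ∈ T, (f t).lab = t.lab) : IsMulti (f '' T) α := by
  constructor
  · rintro _ ⟨t, ht, rfl⟩
    exact (hlab t ht).trans (hT.1 t ht)
  · rintro _ ⟨t₁, ht₁, rfl⟩ _ ⟨t₂, ht₂, rfl⟩ h
    rw [hsrc t₁ ht₁, hsrc t₂ ht₂] at h
    rw [hT.2 t₁ ht₁ t₂ ht₂ h]

end Image

namespace IsMarkRelabelling

variable {A B : AltAutomaton St Λ Mk} {f : Trans St Λ Mk → Trans St Λ Mk}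

lemma isPath_comp (hf : IsMarkRelabelling A B f) {b : ℕ → Trans St Λ Mk} (hb : A.IsPath b) :
    B.IsPath (f ∘ b) := fun i => by
  obtain ⟨hmem, -, -, hdest⟩ := hf _ (hb i).1
  exact ⟨hmem, by simpa only [Function.comp_apply, hdest, (hf _ (hb (i + 1)).1).2.1] using (hb i).2⟩

lemma exists_rightInverse (hf : IsMarkRelabelling A B f) (hsurj : B.delta ⊆ f '' A.delta) :
    ∃ g, IsMarkRelabelling B A g ∧ ∀ t ∈ B.delta, f (g t) = t := by
  classical
  let g t := if ht : t ∈ f '' A.delta then ht.choose else t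
  have hg : ∀ t ∈ B.delta, g t ∈ A.delta ∧ f (g t) = t := fun t ht => by
    simp only [g, dif_pos (hsurj ht)]
    exact (hsurj ht).choose_spec
  refine ⟨g, fun t ht => ?_, fun t ht => (hg t ht).2⟩
  obtain ⟨hmem, hinv⟩ := hg t ht
  obtain ⟨-, hsrc, hlab, hdest⟩ := hf _ hmem
  rw [hinv] at hsrc hlab hdest
  exact ⟨hmem, hsrc.symm, hlab.symm, hdest.symm⟩

lemma isRun_image (hf : IsMarkRelabelling A B f) (hinit : B.init = A.init) {u : ℕ → Λ}
    {ρ : ℕ → Set (Trans St Λ Mk)} (hρ : A.IsRun u ρ) : B.IsRun u (fun i => f '' ρ i) := by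
  have hsrc : ∀ i, ∀ t ∈ ρ i, (f t).src = t.src := fun i t ht => (hf t ((hρ.2 i).1 ht)).2.1
  refine ⟨by rw [mdom_image (hsrc 0), hρ.1, hinit], fun i => ⟨?_, ?_, ?_⟩⟩
  · rintro _ ⟨t, ht, rfl⟩
    exact (hf t ((hρ.2 i).1 ht)).1
  · exact (hρ.2 i).2.1.image (hsrc i) fun t ht => (hf t ((hρ.2 i).1 ht)).2.2.1
  · rw [mrange_image fun t ht => (hf t ((hρ.2 i).1 ht)).2.2.2, mdom_image (hsrc (i + 1))]
    exact (hρ.2 i).2.2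

lemma exists_isInfBranch_comp_eq (hf : IsMarkRelabelling A B f) {u : ℕ → Λ}
    {ρ : ℕ → Set (Trans St Λ Mk)} (hρ : A.IsRun u ρ) {b' : ℕ → Trans St Λ Mk}
    (hb' : IsInfBranch (fun i => f '' ρ i) b') : ∃ b, IsInfBranch ρ b ∧ f ∘ b = b' := by
  choose b hb hfb using fun i => (hb' i).1
  refine ⟨b, fun i => ⟨hb i, ?_⟩, funext hfb⟩
  obtain ⟨-, -, -, hdest⟩ := hf _ ((hρ.2 i).1 (hb i))
  have hsrc := (hf _ ((hρ.2 (i + 1)).1 (hb (i + 1)))).2.1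
  rw [← hsrc, ← hdest, hfb, hfb]
  exact (hb' i).2

lemma isAccRun_image (hf : IsMarkRelabelling A B f) (hinit : B.init = A.init)
    (hacc : B.acc = A.acc) {u : ℕ → Λ} {ρ : ℕ → Set (Trans St Λ Mk)} (hρ : A.IsAccRun u ρ)
    (hmarks : ∀ b, IsInfBranch ρ b → infMarks (f ∘ b) = infMarks b) :
    B.IsAccRun u (fun i => f '' ρ i) := by
  refine ⟨hf.isRun_image hinit hρ.1, fun b' hb' => ?_⟩
  obtain ⟨b, hb, rfl⟩ := hf.exists_isInfBranch_comp_eq hρ.1 hb'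
  rw [hmarks b hb, hacc]
  exact hρ.2 b hb

end IsMarkRelabelling

/-- Let `m` be a mark of an SLAA `A` not lying on any looping
transition. Removing `m` from the mark sets of all transitions (keeping the
acceptance formula) does not change the language. -/
theorem erase_nonlooping_mark {St Λ Mk : Type} (A : AltAutomaton St Λ Mk)
    (hwf : A.WellFormed) (hslaa : A.IsSLAA) (m : Mk)
    (h : ∀ t ∈ A.delta, t.src ∈ t.dest → m ∉ t.marks) :
    ({A with delta := (fun t => {t with marks := t.marks \ {m}}) '' A.delta} :
        AltAutomaton St Λ Mk).Lang = A.Lang := by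
  obtain ⟨hfin, -, -, -, htyped, -⟩ := hwf
  set A' : AltAutomaton St Λ Mk := { A with delta := eraseMark m '' A.delta }
  have hkey : ∀ b, A.IsPath b → infMarks (eraseMark m ∘ b) = infMarks b := fun b hb => by
    rw [infMarks_eraseMark, Set.sdiff_singleton_eq_self
      (hb.notMem_infMarks hslaa hfin (fun t ht => (htyped t ht).1) h)]
  have herase : IsMarkRelabelling A A' (eraseMark m) :=
    fun t ht => ⟨⟨t, ht, rfl⟩, rfl, rfl, rfl⟩
  obtain ⟨g, hg, hgeq⟩ := herase.exists_rightInverse subset_rfl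
  ext u
  constructor
  · rintro ⟨hu, ρ, hρ⟩
    refine ⟨hu, _, hg.isAccRun_image rfl rfl hρ fun b hb => ?_⟩
    have hpath := hg.isPath_comp (hρ.1.isPath hb)
    calc infMarks (g ∘ b) = infMarks (eraseMark m ∘ g ∘ b) := (hkey _ hpath).symm
      _ = infMarks b := congrArg infMarks (funext fun i => hgeq _ (hρ.1.isPath hb i).1)
  · rintro ⟨hu, ρ, hρ⟩
    exact ⟨hu, _, herase.isAccRun_image rfl rfl hρ fun b hb => hkey b (hρ.1.isPath hb)⟩

end SLAA
end

section
/- Let A be an SLAA and m an acceptance mark whose set of owners is a singleton {s}, i.e., s is the only state having an outgoing transition whose mark set contains m. Then a run ρ = T_0T_1… of A satisfies Fin(m) (meaning every infinite branch of ρ satisfies Fin(m)) if and only if ρ contains only finitely many multitransitions T_i marked by m, or ρ contains infinitely many s-escaping multitransitions. -/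
set_option maxHeartbeats 1000000

namespace SLAA

variable {St Λ Mk : Type}

open Classical in
/-- Auxiliary backward branch construction. -/
noncomputable def bwdAux {St Λ Mk : Type} (ρ : ℕ → Set (Trans St Λ Mk)) (i₀ : ℕ)
    (t₀ : Trans St Λ Mk) : ℕ → Trans St Λ Mk
  | 0 => t₀
  | k + 1 =>
      if h : ∃ t ∈ ρ (i₀ - (k + 1)), (bwdAux ρ i₀ t₀ k).src ∈ t.dest then h.choose
      else bwdAux ρ i₀ t₀ k

open Classical in
theorem bwdAux_succ {St Λ Mk : Type} (ρ : ℕ → Set (Trans St Λ Mk)) (i₀ : ℕ)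
    (t₀ : Trans St Λ Mk) (k : ℕ) :
    bwdAux ρ i₀ t₀ (k + 1) =
      if h : ∃ t ∈ ρ (i₀ - (k + 1)), (bwdAux ρ i₀ t₀ k).src ∈ t.dest then h.choose
      else bwdAux ρ i₀ t₀ k := rfl

/-- From level `i₀` onwards there is always a looping transition with source
`s`; then a full infinite branch going through `s` from level `i₀` on exists. -/
theorem exists_branch_through {St Λ Mk : Type} (ρ : ℕ → Set (Trans St Λ Mk)) (s : St) (i₀ : ℕ)
    (hrange : ∀ i, mrange (ρ i) = mdom (ρ (i + 1)))
    (hP : ∀ i, i₀ ≤ i → ∃ t ∈ ρ i, t.src = s ∧ s ∈ t.dest) :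
    ∃ b : ℕ → Trans St Λ Mk, IsInfBranch ρ b ∧ ∀ i, i₀ ≤ i → b i ∈ ρ i ∧ (b i).src = s := by
  classical
  obtain ⟨ht₀mem, ht₀src, ht₀dest⟩ := (hP i₀ le_rfl).choose_spec
  set t₀ := (hP i₀ le_rfl).choose with ht₀
  have hbwd : ∀ k, k ≤ i₀ → bwdAux ρ i₀ t₀ k ∈ ρ (i₀ - k) := by
    intro k
    induction k with
    | zero => intro _; simpa [bwdAux] using ht₀mem
    | succ k ih =>
        intro hk
        have hmem := ih (by omega)
        have hex : ∃ t ∈ ρ (i₀ - (k + 1)), (bwdAux ρ i₀ t₀ k).src ∈ t.dest := by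
          have h1 : (bwdAux ρ i₀ t₀ k).src ∈ mdom (ρ (i₀ - k)) := ⟨_, hmem, rfl⟩
          rw [show i₀ - k = (i₀ - (k + 1)) + 1 from by omega, ← hrange] at h1
          exact h1
        rw [bwdAux_succ, dif_pos hex]
        exact hex.choose_spec.1
  have hedge : ∀ k, k + 1 ≤ i₀ →
      (bwdAux ρ i₀ t₀ k).src ∈ (bwdAux ρ i₀ t₀ (k + 1)).dest := by
    intro k hk
    have hmem := hbwd k (by omega)
    have hex : ∃ t ∈ ρ (i₀ - (k + 1)), (bwdAux ρ i₀ t₀ k).src ∈ t.dest := by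
      have h1 : (bwdAux ρ i₀ t₀ k).src ∈ mdom (ρ (i₀ - k)) := ⟨_, hmem, rfl⟩
      rw [show i₀ - k = (i₀ - (k + 1)) + 1 from by omega, ← hrange] at h1
      exact h1
    rw [bwdAux_succ, dif_pos hex]
    exact hex.choose_spec.2
  refine ⟨fun i => if h : i₀ ≤ i then (hP i h).choose else bwdAux ρ i₀ t₀ (i₀ - i), ?_, ?_⟩
  · intro i
    constructor
    · dsimp only
      by_cases h : i₀ ≤ i
      · rw [dif_pos h]; exact (hP i h).choose_spec.1
      · rw [dif_neg h]
        have := hbwd (i₀ - i) (by omega)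
        rwa [show i₀ - (i₀ - i) = i from by omega] at this
    · dsimp only
      by_cases h : i₀ ≤ i
      · rw [dif_pos h, dif_pos (h.trans (Nat.le_succ i))]
        rw [(hP (i + 1) (h.trans (Nat.le_succ i))).choose_spec.2.1]
        exact (hP i h).choose_spec.2.2
      · have hi : i < i₀ := not_le.mp h
        rw [dif_neg h]
        by_cases h2 : i₀ ≤ i + 1
        · rw [dif_pos h2]
          rw [(hP (i + 1) h2).choose_spec.2.1]
          have he := hedge 0 (by omega)
          rw [show (bwdAux ρ i₀ t₀ 0) = t₀ from rfl, ht₀src] at he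
          rwa [show i₀ - i = 0 + 1 from by omega]
        · rw [dif_neg h2]
          have hk := hedge (i₀ - (i + 1)) (by omega)
          rwa [show i₀ - (i + 1) + 1 = i₀ - i from by omega] at hk
  · intro i h
    dsimp only
    rw [dif_pos h]
    exact ⟨(hP i h).choose_spec.1, (hP i h).choose_spec.2.1⟩

/-- An unbounded set of naturals is infinite. -/
theorem infinite_of_unbounded {S : Set ℕ} (h : ∀ N, ∃ i, N ≤ i ∧ i ∈ S) : S.Infinite := by
  rw [Set.infinite_coe_iff.symm]
  rw [Set.infinite_coe_iff]
  intro hfin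
  obtain ⟨N, hN⟩ := hfin.bddAbove
  obtain ⟨i, hi, hiS⟩ := h (N + 1)
  exact absurd (hN hiS) (by omega)

/-- An infinite set of naturals is unbounded. -/
theorem unbounded_of_infinite {S : Set ℕ} (h : S.Infinite) (N : ℕ) : ∃ i, N < i ∧ i ∈ S := by
  by_contra hc
  push_neg at hc
  exact absurd (Set.Finite.subset (Set.finite_Iic N) fun i hi => le_of_not_gt fun h' => hc i h' hi) h

/-- Let `m` be a mark of an SLAA `A` whose set of owners is
the singleton `{s}`. A run `ρ` of `A` satisfies `Fin m` (every infinite branch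
satisfies `Fin m`) iff `ρ` contains only finitely many multitransitions marked
by `m`, or `ρ` contains infinitely many `s`-escaping multitransitions. -/
theorem fin_iff_single_owner_escaping {St Λ Mk : Type}
    (A : AltAutomaton St Λ Mk) (hwf : A.WellFormed) (hslaa : A.IsSLAA)
    (m : Mk) (s : St)
    (howner : {q | ∃ t ∈ A.delta, t.src = q ∧ m ∈ t.marks} = {s})
    (u : ℕ → Λ) (ρ : ℕ → Set (Trans St Λ Mk)) (hρ : A.IsRun u ρ) :
    (∀ b, IsInfBranch ρ b → m ∉ infMarks b) ↔
      ({i | markedBy (ρ i) m}.Finite ∨ {i | escaping (ρ i) s}.Infinite) := by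
  obtain ⟨le, hpo, hle⟩ := hslaa
  obtain ⟨hdom0, hstep⟩ := hρ
  have hsub : ∀ i, ρ i ⊆ A.delta := fun i => (hstep i).1
  have hmulti : ∀ i, IsMulti (ρ i) (u i) := fun i => (hstep i).2.1
  have hrange : ∀ i, mrange (ρ i) = mdom (ρ (i + 1)) := fun i => (hstep i).2.2
  have hown : ∀ t ∈ A.delta, m ∈ t.marks → t.src = s := by
    intro t ht hmt
    have h1 : t.src ∈ {q | ∃ t ∈ A.delta, t.src = q ∧ m ∈ t.marks} := ⟨t, ht, rfl, hmt⟩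
    rwa [howner] at h1
  constructor
  · intro hall
    by_contra hR
    rw [not_or] at hR
    obtain ⟨h1, h2⟩ := hR
    have hmk : {i | markedBy (ρ i) m}.Infinite := h1
    have hesc : {i | escaping (ρ i) s}.Finite := Set.not_infinite.mp h2
    obtain ⟨N, hN⟩ := hesc.bddAbove
    have hnesc : ∀ i, N < i → ¬ escaping (ρ i) s := fun i hi h =>
      absurd (hN h) (not_le.mpr hi)
    obtain ⟨i₀, hi₀N, hi₀mem⟩ := unbounded_of_infinite hmk N
    have hP : ∀ i, i₀ ≤ i → ∃ t ∈ ρ i, t.src = s ∧ s ∈ t.dest := by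
      intro i hi
      induction i, hi using Nat.le_induction with
      | base =>
          obtain ⟨t, ht, hmt⟩ := hi₀mem
          have hts : t.src = s := hown t (hsub i₀ ht) hmt
          refine ⟨t, ht, hts, ?_⟩
          by_contra hcon
          exact hnesc i₀ hi₀N ⟨t, ht, hts, hcon⟩
      | succ i hi ih =>
          obtain ⟨t, ht, hts, htd⟩ := ih
          have hs : s ∈ mdom (ρ (i + 1)) := (hrange i) ▸ ⟨t, ht, htd⟩
          obtain ⟨t', ht', hts'⟩ := hs
          refine ⟨t', ht', hts', ?_⟩
          by_contra hcon
          exact hnesc (i + 1) (by omega) ⟨t', ht', hts', hcon⟩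
    obtain ⟨b, hb, hbs⟩ := exists_branch_through ρ s i₀ hrange hP
    refine hall b hb ?_
    intro N'
    obtain ⟨i, hi, hmi⟩ := unbounded_of_infinite hmk (max N' i₀)
    have hi₀i : i₀ ≤ i := le_trans (le_max_right N' i₀) hi.le
    obtain ⟨t, ht, hmt⟩ := hmi
    have hts : t.src = s := hown t (hsub i ht) hmt
    obtain ⟨hbmem, hbsrc⟩ := hbs i hi₀i
    have heq : t = b i := (hmulti i).2 t ht (b i) hbmem (hts.trans hbsrc.symm)
    exact ⟨i, le_trans (le_max_left N' i₀) hi.le, heq ▸ hmt⟩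
  · intro hcase b hb hm
    rcases hcase with hfin | hesc
    · obtain ⟨N, hN⟩ := hfin.bddAbove
      obtain ⟨i, hi, hmi⟩ := hm (N + 1)
      have : i ≤ N := hN ⟨b i, (hb i).1, hmi⟩
      omega
    · have hstep1 : ∀ j, le ((b (j + 1)).src) ((b j).src) := fun j =>
        hle (b j) (hsub j (hb j).1) _ (hb j).2
      have hmono : ∀ i k, le ((b (i + k)).src) ((b i).src) := by
        intro i k
        induction k with
        | zero => exact hpo.refl _
        | succ k ih => exact hpo.trans _ _ _ (hstep1 (i + k)) ih
      obtain ⟨i₀, hi₀, hmi₀⟩ := hm 0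
      have hsrc₀ : (b i₀).src = s := hown (b i₀) (hsub i₀ (hb i₀).1) hmi₀
      have hall_s : ∀ j, i₀ ≤ j → (b j).src = s := by
        intro j hj
        obtain ⟨k, hk, hmk'⟩ := hm j
        have hsk : (b k).src = s := hown (b k) (hsub k (hb k).1) hmk'
        have hA : le ((b j).src) s := by
          have := hmono i₀ (j - i₀)
          rwa [Nat.add_sub_cancel' hj, hsrc₀] at this
        have hB : le s ((b j).src) := by
          have := hmono j (k - j)
          rwa [Nat.add_sub_cancel' hk, hsk] at this
        exact hpo.antisymm _ _ hA hB
      obtain ⟨j, hjlt, hjmem⟩ := unbounded_of_infinite hesc i₀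
      obtain ⟨t, ht, hts, htd⟩ := hjmem
      have hbj : (b j).src = s := hall_s j hjlt.le
      have heq : t = b j := (hmulti j).2 t ht (b j) (hb j).1 (hts.trans hbj.symm)
      have hnext : (b (j + 1)).src ∈ (b j).dest := (hb j).2
      rw [hall_s (j + 1) (by omega)] at hnext
      rw [← heq] at hnext
      exact htd hnext

end SLAA
end
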